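/- arXiv:1907.11120 — 3 statements merged into one kernel-verified Lean document; each statement's English description precedes it below -/
import Mathlib

section
/- Let Γ ⊆ Sym({1,…,n}) be a permutation group and let v ∈ S_d(Γ) be irreducible with arrangement space U ⊆ ℝ^n (which is d-dimensional). Then v is flexible if and only if there exists a d-dimensional Γ-invariant subspace Ū ⊆ ℝ^n with Ū ≠ U such that Ū is not orthogonal to U. -/
open Matrix

/-- The matrix of an arrangement of `n` points in `ℝ^d`: the `i`-th row is the point `v i`. -/
def arrMat {n d : ℕ} (v : Fin n → Fin d → ℝ) : Matrix (Fin n) (Fin d) ℝ := Matrix.of v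

/-- An arrangement is normalized if `MᵀM` is the identity matrix. -/
def IsNormalized {n d : ℕ} (v : Fin n → Fin d → ℝ) : Prop :=
  (arrMat v)ᵀ * arrMat v = 1

/-- The arrangement space of `v`: the column span of its matrix, a subspace of `ℝ^n`. -/
def arrSpace {n d : ℕ} (v : Fin n → Fin d → ℝ) : Submodule ℝ (Fin n → ℝ) :=
  Submodule.span ℝ (Set.range (arrMat v)ᵀ)

/-- `detPair v w = det (M_wᵀ * M_v)`, i.e. `det(v, w̄) = det(M̄ᵀ M)` with `w` playing `v̄`. -/
noncomputable def detPair {n d : ℕ} (v w : Fin n → Fin d → ℝ) : ℝ :=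
  ((arrMat w)ᵀ * arrMat v).det

/-- Two subspaces `U, W ⊆ ℝ^n` are orthogonal if `⟨u, w⟩ = 0` for all `u ∈ U`, `w ∈ W`. -/
def OrthSpaces {n : ℕ} (U W : Submodule ℝ (Fin n → ℝ)) : Prop :=
  ∀ u ∈ U, ∀ w ∈ W, u ⬝ᵥ w = 0

/-- Arrangements are equivalent if related by an invertible linear map `X`. -/
def AreEquivalent {n d : ℕ} (v w : Fin n → Fin d → ℝ) : Prop :=
  ∃ X : Matrix (Fin d) (Fin d) ℝ, X.det ≠ 0 ∧ ∀ i, X.mulVec (v i) = w i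

/-- Arrangements are positively equivalent if related by a linear map of positive determinant. -/
def PosEquivalent {n d : ℕ} (v w : Fin n → Fin d → ℝ) : Prop :=
  ∃ X : Matrix (Fin d) (Fin d) ℝ, 0 < X.det ∧ ∀ i, X.mulVec (v i) = w i

/-- `T : Γ → O(ℝ^d)` is a representation: orthogonal values and multiplicative. -/
def IsRep {n d : ℕ} (Γ : Subgroup (Equiv.Perm (Fin n)))
    (T : Γ → Matrix (Fin d) (Fin d) ℝ) : Prop :=
  (∀ φ, (T φ)ᵀ * T φ = 1) ∧ (∀ φ ψ, T (φ * ψ) = T φ * T ψ)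

/-- `T` is a representation of the arrangement `v`: `T_φ v_i = v_{φ(i)}`. -/
def IsRepOf {n d : ℕ} (Γ : Subgroup (Equiv.Perm (Fin n)))
    (T : Γ → Matrix (Fin d) (Fin d) ℝ) (v : Fin n → Fin d → ℝ) : Prop :=
  IsRep Γ T ∧ ∀ (φ : Γ) (i : Fin n), (T φ).mulVec (v i) = v (φ.val i)

/-- `v` is a `Γ`-arrangement if it has a representation. -/
def IsGammaArr {n d : ℕ} (Γ : Subgroup (Equiv.Perm (Fin n)))
    (v : Fin n → Fin d → ℝ) : Prop :=
  ∃ T : Γ → Matrix (Fin d) (Fin d) ℝ, IsRepOf Γ T v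

/-- A representation is irreducible if the only invariant subspaces of `ℝ^d` are `⊥` and `⊤`. -/
def IrredRep {n d : ℕ} (Γ : Subgroup (Equiv.Perm (Fin n)))
    (T : Γ → Matrix (Fin d) (Fin d) ℝ) : Prop :=
  ∀ W : Submodule ℝ (Fin d → ℝ), (∀ (φ : Γ), ∀ x ∈ W, (T φ).mulVec x ∈ W) → W = ⊥ ∨ W = ⊤

/-- Representations are isomorphic: an invertible equivariant map exists. -/
def IsoReps {n d : ℕ} (Γ : Subgroup (Equiv.Perm (Fin n)))
    (T T' : Γ → Matrix (Fin d) (Fin d) ℝ) : Prop :=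
  ∃ R : Matrix (Fin d) (Fin d) ℝ, R.det ≠ 0 ∧ ∀ φ, R * T φ = T' φ * R

/-- Representations are positively isomorphic: an equivariant map with positive determinant. -/
def PosIsoReps {n d : ℕ} (Γ : Subgroup (Equiv.Perm (Fin n)))
    (T T' : Γ → Matrix (Fin d) (Fin d) ℝ) : Prop :=
  ∃ R : Matrix (Fin d) (Fin d) ℝ, 0 < R.det ∧ ∀ φ, R * T φ = T' φ * R

/-- `S_d(Γ)`: the set of normalized `Γ`-arrangements of `n` points in `ℝ^d`. -/
def SdSet (n d : ℕ) (Γ : Subgroup (Equiv.Perm (Fin n))) : Set (Fin n → Fin d → ℝ) :=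
  {v | IsNormalized v ∧ IsGammaArr Γ v}

/-- Deformation equivalence: a continuous path in `S_d(Γ)` from `v` to `w`. -/
def DeformEquiv {n d : ℕ} (Γ : Subgroup (Equiv.Perm (Fin n)))
    (v w : Fin n → Fin d → ℝ) : Prop :=
  ∃ c : ℝ → (Fin n → Fin d → ℝ), ContinuousOn c (Set.Icc 0 1) ∧
    (∀ t ∈ Set.Icc (0:ℝ) 1, c t ∈ SdSet n d Γ) ∧ c 0 = v ∧ c 1 = w

/-- `v` is flexible if it can be deformed into some non-equivalent arrangement. -/
def Flexible {n d : ℕ} (Γ : Subgroup (Equiv.Perm (Fin n))) (v : Fin n → Fin d → ℝ) : Prop :=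
  ∃ w : Fin n → Fin d → ℝ, DeformEquiv Γ v w ∧ ¬ AreEquivalent v w

/-- A subspace `W ⊆ ℝ^n` is `Γ`-invariant (under the permutation action). -/
def GammaInvariant {n : ℕ} (Γ : Subgroup (Equiv.Perm (Fin n)))
    (W : Submodule ℝ (Fin n → ℝ)) : Prop :=
  ∀ (φ : Γ), ∀ x ∈ W, (fun i => x (φ.val⁻¹ i)) ∈ W

/-!
Let `U` be the arrangement space of `v`. If every `d`-dimensional `Γ`-invariant subspace were `U`
or orthogonal to `U`, then along a deformation `v(t)` the arrangement space of `v(t)` would be `U`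
or orthogonal to `U`, so `det (M(t)ᵀ M)` would take only the values `±1` and `0`; being continuous
and equal to `1` at `t = 0`, it stays `1`, and `v(1)` spans `U`, i.e. is equivalent to `v`.

Conversely, project `v` orthogonally onto an invariant `Ū` not orthogonal to `U`. The projection
is again equivariant, so by Schur's lemma it equals `√λ v̄` for a normalized `Γ`-arrangement `v̄`
with the same representation, arrangement space `Ū`, and `Mᵀ M̄ = √λ I`, `λ > 0`. The segment from
`v` to `v̄`, renormalized, stays in `S_d(Γ)`, and `v̄` is not equivalent to `v` since `Ū ≠ U`.
-/

section

variable {n d : ℕ} {Γ : Subgroup (Equiv.Perm (Fin n))}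

lemma IsNormalized.transpose_mul_self {v : Fin n → Fin d → ℝ} (hv : IsNormalized v) :
    (arrMat v)ᵀ * arrMat v = 1 := hv

lemma arrSpace_eq_range (v : Fin n → Fin d → ℝ) :
    arrSpace v = LinearMap.range (arrMat v).mulVecLin :=
  (Matrix.range_mulVecLin _).symm

lemma mem_arrSpace_iff {v : Fin n → Fin d → ℝ} {x : Fin n → ℝ} :
    x ∈ arrSpace v ↔ ∃ a, arrMat v *ᵥ a = x := by
  simp [arrSpace_eq_range]

lemma arrSpace_le_of_arrMat_eq_mul {v w : Fin n → Fin d → ℝ} {X : Matrix (Fin d) (Fin d) ℝ}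
    (h : arrMat w = arrMat v * X) : arrSpace w ≤ arrSpace v := by
  rw [arrSpace_eq_range, arrSpace_eq_range, h, Matrix.mulVecLin_mul]
  exact LinearMap.range_comp_le_range _ _

lemma finrank_arrSpace {v : Fin n → Fin d → ℝ} (hv : IsNormalized v) :
    Module.finrank ℝ (arrSpace v) = d := by
  have hinj : Function.Injective (arrMat v).mulVecLin := fun a b hab => by
    simpa [hv.transpose_mul_self] using congrArg ((arrMat v)ᵀ *ᵥ ·) hab
  rw [arrSpace_eq_range, LinearMap.finrank_range_of_inj hinj, Module.finrank_fin_fun]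

lemma mul_transpose_mul_of_arrSpace_le {v w : Fin n → Fin d → ℝ} (hv : IsNormalized v)
    (hle : arrSpace w ≤ arrSpace v) :
    arrMat v * ((arrMat v)ᵀ * arrMat w) = arrMat w := by
  refine Matrix.ext_of_mulVec_single fun j => ?_
  obtain ⟨a, ha⟩ := mem_arrSpace_iff.mp (hle (mem_arrSpace_iff.mpr ⟨Pi.single j 1, rfl⟩))
  rw [← Matrix.mulVec_mulVec, ← Matrix.mulVec_mulVec, ← ha, Matrix.mulVec_mulVec a,
    hv.transpose_mul_self, Matrix.one_mulVec]

lemma exists_orthogonal_of_arrSpace_le {v w : Fin n → Fin d → ℝ} (hv : IsNormalized v)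
    (hw : IsNormalized w) (hle : arrSpace w ≤ arrSpace v) :
    ∃ X : Matrix (Fin d) (Fin d) ℝ, Xᵀ * X = 1 ∧ arrMat w = arrMat v * X := by
  have hX := mul_transpose_mul_of_arrSpace_le hv hle
  refine ⟨(arrMat v)ᵀ * arrMat w, ?_, hX.symm⟩
  rw [Matrix.transpose_mul, Matrix.transpose_transpose, Matrix.mul_assoc, hX,
    hw.transpose_mul_self]

lemma areEquivalent_iff_arrSpace_eq {v w : Fin n → Fin d → ℝ} (hv : IsNormalized v)
    (hw : IsNormalized w) : AreEquivalent v w ↔ arrSpace v = arrSpace w := by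
  constructor
  · rintro ⟨X, -, hX⟩
    have hmul : arrMat w = arrMat v * Xᵀ := by
      ext i j
      simp only [arrMat, Matrix.of_apply, Matrix.mul_apply, Matrix.transpose_apply, ← hX i,
        Matrix.mulVec, dotProduct, mul_comm]
    refine (Submodule.eq_of_le_of_finrank_le (arrSpace_le_of_arrMat_eq_mul hmul) ?_).symm
    rw [finrank_arrSpace hv, finrank_arrSpace hw]
  · intro heq
    obtain ⟨X, hXX, hX⟩ := exists_orthogonal_of_arrSpace_le hv hw heq.ge
    refine ⟨Xᵀ, ?_, fun i => ?_⟩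
    · have := congrArg Matrix.det hXX
      rw [Matrix.det_mul, Matrix.det_transpose, Matrix.det_one] at this
      rw [Matrix.det_transpose]
      exact left_ne_zero_of_mul_eq_one this
    · ext j
      change _ = arrMat w i j
      rw [hX]
      simp [Matrix.mulVec, dotProduct, Matrix.mul_apply, arrMat, mul_comm]

lemma det_transpose_mul_eq_one_or_of_arrSpace_le {v w : Fin n → Fin d → ℝ} (hv : IsNormalized v)
    (hw : IsNormalized w) (hle : arrSpace w ≤ arrSpace v) :
    ((arrMat w)ᵀ * arrMat v).det = 1 ∨ ((arrMat w)ᵀ * arrMat v).det = -1 := by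
  obtain ⟨X, hXX, hX⟩ := exists_orthogonal_of_arrSpace_le hv hw hle
  have hdet := congrArg Matrix.det hXX
  rw [Matrix.det_mul, Matrix.det_transpose, Matrix.det_one] at hdet
  rw [hX, Matrix.transpose_mul, Matrix.mul_assoc, hv.transpose_mul_self, Matrix.mul_one,
    Matrix.det_transpose]
  exact mul_self_eq_one_iff.mp hdet

lemma mul_transpose_eq_of_arrSpace_le {v w : Fin n → Fin d → ℝ} (hv : IsNormalized v)
    (hw : IsNormalized w) (hle : arrSpace w ≤ arrSpace v) :
    arrMat w * (arrMat w)ᵀ = arrMat v * (arrMat v)ᵀ := by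
  obtain ⟨X, hXX, hX⟩ := exists_orthogonal_of_arrSpace_le hv hw hle
  rw [hX, Matrix.transpose_mul, Matrix.mul_assoc, ← Matrix.mul_assoc X, mul_eq_one_comm.mp hXX,
    Matrix.one_mul]

lemma orthSpaces_arrSpace_iff {v w : Fin n → Fin d → ℝ} :
    OrthSpaces (arrSpace v) (arrSpace w) ↔ (arrMat w)ᵀ * arrMat v = 0 := by
  constructor
  · intro h
    ext j k
    have := h _ (mem_arrSpace_iff.mpr ⟨Pi.single k 1, rfl⟩) _
      (mem_arrSpace_iff.mpr ⟨Pi.single j 1, rfl⟩)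
    simpa [dotProduct, Matrix.mul_apply, mul_comm] using this
  · rintro h _ hx _ hy
    obtain ⟨a, rfl⟩ := mem_arrSpace_iff.mp hx
    obtain ⟨b, rfl⟩ := mem_arrSpace_iff.mp hy
    have h' : (arrMat v)ᵀ * arrMat w = 0 := by
      simpa using congrArg Matrix.transpose h
    rw [Matrix.dotProduct_mulVec, ← Matrix.vecMul_transpose, Matrix.vecMul_vecMul, h',
      Matrix.vecMul_zero, zero_dotProduct]

lemma exists_isNormalized_arrSpace_eq (W : Submodule ℝ (Fin n → ℝ))
    (hW : Module.finrank ℝ W = d) : ∃ N : Fin n → Fin d → ℝ, IsNormalized N ∧ arrSpace N = W := by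
  let e := WithLp.linearEquiv 2 ℝ (Fin n → ℝ)
  let K : Submodule ℝ (EuclideanSpace ℝ (Fin n)) := W.map (e.symm : _ →ₗ[ℝ] _)
  have hK : Module.finrank ℝ K = d := by rw [← hW]; exact e.symm.finrank_map_eq W
  let b := (stdOrthonormalBasis ℝ K).reindex (finCongr hK)
  let N : Fin n → Fin d → ℝ := fun i j => (b j : EuclideanSpace ℝ (Fin n)) i
  have hN : IsNormalized N := by
    ext j k
    have := b.inner_eq_ite j k
    simp only [Submodule.coe_inner, EuclideanSpace.inner_eq_star_dotProduct] at this
    simp [Matrix.mul_apply, arrMat, N, Matrix.one_apply, ← this, dotProduct, mul_comm]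
  refine ⟨N, hN, Submodule.eq_of_le_of_finrank_le ?_ (by rw [hW, finrank_arrSpace hN])⟩
  refine Submodule.span_le.mpr ?_
  rintro _ ⟨j, rfl⟩
  exact (Submodule.mem_map_equiv _).mp (b j).2

lemma gammaInvariant_iff_comp {W : Submodule ℝ (Fin n → ℝ)} :
    GammaInvariant Γ W ↔ ∀ φ : Γ, ∀ x ∈ W, x ∘ φ.val ∈ W := by
  constructor
  · intro h φ x hx
    simpa [Function.comp_def] using h φ⁻¹ x hx
  · intro h φ x hx
    exact h φ⁻¹ x hx

lemma forall_mulVec_eq_iff_submatrix (S : Matrix (Fin d) (Fin d) ℝ) (σ : Fin n → Fin n)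
    (v : Fin n → Fin d → ℝ) :
    (∀ i, S *ᵥ v i = v (σ i)) ↔ (arrMat v).submatrix σ id = arrMat v * Sᵀ := by
  have hrow : ∀ i, (arrMat v * Sᵀ) i = S *ᵥ v i := fun i => by
    ext j
    simp [Matrix.mul_apply, Matrix.mulVec, dotProduct, arrMat, mul_comm]
  constructor
  · intro h
    ext i j
    rw [hrow, h]
    rfl
  · intro h i
    rw [← hrow, ← h]
    rfl

lemma IsRepOf.submatrix_arrMat {T : Γ → Matrix (Fin d) (Fin d) ℝ} {v : Fin n → Fin d → ℝ}
    (hT : IsRepOf Γ T v) (φ : Γ) : (arrMat v).submatrix φ.val id = arrMat v * (T φ)ᵀ :=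
  (forall_mulVec_eq_iff_submatrix _ _ _).mp (hT.2 φ)

lemma gammaInvariant_arrSpace {v : Fin n → Fin d → ℝ} (hv : IsGammaArr Γ v) :
    GammaInvariant Γ (arrSpace v) := by
  obtain ⟨T, hT⟩ := hv
  refine gammaInvariant_iff_comp.mpr fun φ x hx => ?_
  obtain ⟨a, rfl⟩ := mem_arrSpace_iff.mp hx
  refine mem_arrSpace_iff.mpr ⟨(T φ)ᵀ *ᵥ a, ?_⟩
  rw [Matrix.mulVec_mulVec, ← hT.submatrix_arrMat]
  rfl

/-- The orthogonal projection onto a `Γ`-invariant subspace commutes with `Γ`. -/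
lemma submatrix_mul_transpose_of_gammaInvariant {N : Fin n → Fin d → ℝ} (hN : IsNormalized N)
    (hinv : GammaInvariant Γ (arrSpace N)) (φ : Γ) :
    (arrMat N * (arrMat N)ᵀ).submatrix φ.val φ.val = arrMat N * (arrMat N)ᵀ := by
  have hφN : IsNormalized (N ∘ φ.val) := by
    change ((arrMat N).submatrix φ.val id)ᵀ * (arrMat N).submatrix φ.val id = 1
    rw [Matrix.transpose_submatrix, Matrix.submatrix_mul_equiv, Matrix.submatrix_id_id,
      hN.transpose_mul_self]
  have hle : arrSpace (N ∘ φ.val) ≤ arrSpace N := by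
    refine Submodule.span_le.mpr ?_
    rintro _ ⟨j, rfl⟩
    exact gammaInvariant_iff_comp.mp hinv φ _ (Submodule.subset_span ⟨j, rfl⟩)
  rw [Matrix.submatrix_mul _ _ _ id _ Function.bijective_id]
  exact mul_transpose_eq_of_arrSpace_le hN hφN hle

lemma transpose_mul_mul_comm {m k R : Type*} [Fintype m] [Fintype k] [DecidableEq k]
    [CommRing R] {S : Matrix k k R} (hS : Sᵀ * S = 1) (σ : Equiv.Perm m)
    {M B : Matrix m k R} (hM : M.submatrix σ id = M * Sᵀ) (hB : B.submatrix σ id = B * Sᵀ) :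
    Mᵀ * B * S = S * (Mᵀ * B) := by
  have hinv : S * (Mᵀ * B) * Sᵀ = Mᵀ * B := by
    calc S * (Mᵀ * B) * Sᵀ = (M * Sᵀ)ᵀ * (B * Sᵀ) := by
          simp only [Matrix.transpose_mul, Matrix.transpose_transpose, Matrix.mul_assoc]
      _ = (Mᵀ).submatrix id σ * B.submatrix σ id := by rw [← hM, ← hB]; rfl
      _ = Mᵀ * B := by
          rw [Matrix.submatrix_mul_equiv, Matrix.submatrix_id_id]
  calc Mᵀ * B * S = S * (Mᵀ * B) * Sᵀ * S := by rw [hinv]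
    _ = S * (Mᵀ * B) := by rw [Matrix.mul_assoc _ Sᵀ, hS, Matrix.mul_one]

/-- Schur's lemma: an eigenspace of `A` is `T`-invariant. -/
lemma IrredRep.eq_smul_one {T : Γ → Matrix (Fin d) (Fin d) ℝ} (hirr : IrredRep Γ T)
    {A : Matrix (Fin d) (Fin d) ℝ} (hA : Aᵀ = A) (hcomm : ∀ φ, A * T φ = T φ * A) :
    ∃ c : ℝ, A = c • 1 := by
  rcases isEmpty_or_nonempty (Fin d) with hd | ⟨⟨j⟩⟩
  · exact ⟨0, Subsingleton.elim _ _⟩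
  have hA' : A.IsHermitian := Matrix.isHermitian_iff_isSymm.mpr hA
  let E := Module.End.eigenspace (Matrix.toLin' A) (hA'.eigenvalues j)
  have hE : E = ⊤ := by
    refine (hirr E fun φ x hx => ?_).resolve_left fun hbot => ?_
    · rw [Module.End.mem_eigenspace_iff, Matrix.toLin'_apply] at hx ⊢
      rw [Matrix.mulVec_mulVec, hcomm, ← Matrix.mulVec_mulVec, hx, Matrix.mulVec_smul]
    · have hx : (hA'.eigenvectorBasis j).ofLp ∈ E :=
        Module.End.mem_eigenspace_iff.mpr (hA'.mulVec_eigenvectorBasis j)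
      rw [hbot, Submodule.mem_bot] at hx
      exact hA'.eigenvectorBasis.orthonormal.ne_zero j (by simpa using congrArg (WithLp.toLp 2) hx)
  refine ⟨hA'.eigenvalues j, Matrix.ext_of_mulVec_single fun i => ?_⟩
  have hi : Pi.single i 1 ∈ E := hE ▸ Submodule.mem_top
  rw [Module.End.mem_eigenspace_iff, Matrix.toLin'_apply] at hi
  rw [hi, Matrix.smul_mulVec, Matrix.one_mulVec]

lemma transpose_mul_self_smul_add_smul {v w : Fin n → Fin d → ℝ} (hv : IsNormalized v)
    (hw : IsNormalized w) {μ : ℝ} (hvw : (arrMat v)ᵀ * arrMat w = μ • 1) (a b : ℝ) :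
    (arrMat (a • v + b • w))ᵀ * arrMat (a • v + b • w) = (a ^ 2 + b ^ 2 + 2 * a * b * μ) • 1 := by
  have hwv : (arrMat w)ᵀ * arrMat v = μ • 1 := by
    simpa using congrArg Matrix.transpose hvw
  change (a • arrMat v + b • arrMat w)ᵀ * (a • arrMat v + b • arrMat w) = _
  simp only [Matrix.transpose_add, Matrix.transpose_smul, Matrix.add_mul, Matrix.mul_add,
    Matrix.smul_mul, Matrix.mul_smul, hv.transpose_mul_self, hw.transpose_mul_self, hvw, hwv,
    smul_smul, ← add_smul]
  ring_nf

lemma deformEquiv_of_transpose_mul_eq_smul {T : Γ → Matrix (Fin d) (Fin d) ℝ}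
    {v w : Fin n → Fin d → ℝ} (hv : IsNormalized v) (hw : IsNormalized w) (hTv : IsRepOf Γ T v)
    (hTw : IsRepOf Γ T w) {μ : ℝ} (hμ : -1 < μ) (hvw : (arrMat v)ᵀ * arrMat w = μ • 1) :
    DeformEquiv Γ v w := by
  let s : ℝ → ℝ := fun t => (1 - t) ^ 2 + t ^ 2 + 2 * (1 - t) * t * μ
  have hs : ∀ t ∈ Set.Icc (0 : ℝ) 1, 0 < s t := fun t ht => by
    nlinarith [mul_nonneg (mul_nonneg (sub_nonneg.mpr ht.2) ht.1) (neg_lt_iff_pos_add.mp hμ).le,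
      sq_nonneg (2 * t - 1)]
  let c : ℝ → Fin n → Fin d → ℝ := fun t => (√(s t))⁻¹ • ((1 - t) • v + t • w)
  refine ⟨c, ?_, fun t ht => ⟨?_, T, hTv.1, fun φ i => ?_⟩, by simp [c, s], by simp [c, s]⟩
  · have hr : ContinuousOn (fun t => (√(s t))⁻¹) (Set.Icc 0 1) :=
      ContinuousOn.inv₀ (by fun_prop) fun t ht => (Real.sqrt_pos.mpr (hs t ht)).ne'
    exact hr.smul (by fun_prop)
  · have hct : c t = ((√(s t))⁻¹ * (1 - t)) • v + ((√(s t))⁻¹ * t) • w := by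
      simp only [c, smul_add, smul_smul]
    have hsq : (√(s t)) ^ 2 = s t := Real.sq_sqrt (hs t ht).le
    have hne : √(s t) ≠ 0 := (Real.sqrt_pos.mpr (hs t ht)).ne'
    change (arrMat (c t))ᵀ * arrMat (c t) = 1
    rw [hct, transpose_mul_self_smul_add_smul hv hw hvw]
    convert one_smul ℝ (1 : Matrix (Fin d) (Fin d) ℝ)
    field_simp
    rw [hsq]
    ring
  · simp [c, Matrix.mulVec_smul, Matrix.mulVec_add, hTv.2, hTw.2]

lemma exists_isRepOf_arrSpace_eq {v : Fin n → Fin d → ℝ}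
    {T : Γ → Matrix (Fin d) (Fin d) ℝ} (hT : IsRepOf Γ T v) (hirr : IrredRep Γ T)
    {W : Submodule ℝ (Fin n → ℝ)} (hinv : GammaInvariant Γ W) (hW : Module.finrank ℝ W = d)
    (horth : ¬ OrthSpaces (arrSpace v) W) :
    ∃ w : Fin n → Fin d → ℝ, IsNormalized w ∧ IsRepOf Γ T w ∧ arrSpace w = W ∧
      ∃ μ : ℝ, 0 < μ ∧ (arrMat v)ᵀ * arrMat w = μ • 1 := by
  obtain ⟨N, hN, rfl⟩ := exists_isNormalized_arrSpace_eq W hW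
  set C := (arrMat N)ᵀ * arrMat v
  set B := arrMat N * C
  have hB : ∀ φ : Γ, B.submatrix φ.val id = B * (T φ)ᵀ := fun φ => by
    rw [show B = arrMat N * (arrMat N)ᵀ * arrMat v from (Matrix.mul_assoc ..).symm,
      Matrix.submatrix_mul _ _ _ φ.val _ φ.val.bijective,
      submatrix_mul_transpose_of_gammaInvariant hN hinv φ, hT.submatrix_arrMat]
    simp only [Matrix.mul_assoc]
  have hMB : (arrMat v)ᵀ * B = Cᵀ * C := by
    simp only [B, C, Matrix.transpose_mul, Matrix.transpose_transpose, Matrix.mul_assoc]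
  have hBB : Bᵀ * B = Cᵀ * C := by
    simp only [B, Matrix.transpose_mul, Matrix.mul_assoc, ← Matrix.mul_assoc (arrMat N)ᵀ,
      hN.transpose_mul_self, Matrix.one_mul]
  obtain ⟨lam, hlam⟩ := hirr.eq_smul_one (A := Cᵀ * C) (by simp [Matrix.transpose_mul])
    fun φ => by
      rw [← hMB]
      exact transpose_mul_mul_comm (hT.1.1 φ) φ.val (hT.submatrix_arrMat φ) (hB φ)
  have hlam_pos : 0 < lam := by
    obtain ⟨i, j, hij⟩ : ∃ i j, C i j ≠ 0 := by
      by_contra! h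
      exact horth (orthSpaces_arrSpace_iff.mpr (Matrix.ext h))
    have hjj := congrFun (congrFun hlam j) j
    simp only [Matrix.mul_apply, Matrix.transpose_apply, Matrix.smul_apply, Matrix.one_apply_eq,
      smul_eq_mul, mul_one] at hjj
    rw [← hjj]
    exact Finset.sum_pos' (fun k _ => mul_self_nonneg _)
      ⟨i, Finset.mem_univ _, mul_self_pos.mpr hij⟩
  set μ := √lam
  have hμ : 0 < μ := Real.sqrt_pos.mpr hlam_pos
  have hμμ : μ * μ = lam := Real.mul_self_sqrt hlam_pos.le
  let w : Fin n → Fin d → ℝ := Matrix.of.symm (μ⁻¹ • B)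
  have hw : arrMat w = μ⁻¹ • B := rfl
  have hwN : IsNormalized w := by
    rw [IsNormalized, hw, Matrix.transpose_smul, Matrix.smul_mul, Matrix.mul_smul, hBB, hlam,
      smul_smul, smul_smul, ← hμμ]
    field_simp
    exact one_smul _ _
  refine ⟨w, hwN, ⟨hT.1, fun φ => ?_⟩, ?_, μ, hμ, ?_⟩
  · rw [forall_mulVec_eq_iff_submatrix, hw]
    change μ⁻¹ • B.submatrix φ.val id = _
    rw [hB, Matrix.smul_mul]
  · refine Submodule.eq_of_le_of_finrank_le (arrSpace_le_of_arrMat_eq_mul (X := μ⁻¹ • C) ?_) ?_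
    · rw [hw, Matrix.mul_smul]
    · rw [finrank_arrSpace hN, finrank_arrSpace hwN]
  · rw [hw, Matrix.mul_smul, hMB, hlam, smul_smul, ← hμμ, inv_mul_cancel_left₀ hμ.ne']

lemma exists_gammaInvariant_of_flexible {v : Fin n → Fin d → ℝ} (hv : IsNormalized v)
    (hflex : Flexible Γ v) :
    ∃ W : Submodule ℝ (Fin n → ℝ), GammaInvariant Γ W ∧ Module.finrank ℝ W = d ∧
      W ≠ arrSpace v ∧ ¬ OrthSpaces (arrSpace v) W := by
  obtain ⟨w, ⟨c, hc, hmem, rfl, rfl⟩, hne⟩ := hflex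
  rcases isEmpty_or_nonempty (Fin d) with _ | _
  · exact absurd ⟨1, by simp, fun i => Subsingleton.elim _ _⟩ hne
  by_contra! hno
  have h0 : (0 : ℝ) ∈ Set.Icc 0 1 := Set.left_mem_Icc.mpr zero_le_one
  have h1 : (1 : ℝ) ∈ Set.Icc 0 1 := Set.right_mem_Icc.mpr zero_le_one
  let g : ℝ → ℝ := fun t => ((arrMat (c t))ᵀ * arrMat (c 0)).det
  have hdich : ∀ t ∈ Set.Icc (0 : ℝ) 1, arrSpace (c t) = arrSpace (c 0) ∨ g t = 0 := by
    intro t ht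
    refine or_iff_not_imp_left.mpr fun hU => ?_
    obtain ⟨hN, hGA⟩ := hmem t ht
    have := hno _ (gammaInvariant_arrSpace hGA) (finrank_arrSpace hN) hU
    simp [g, orthSpaces_arrSpace_iff.mp this]
  have hg : Set.MapsTo g (Set.Icc 0 1) {-1, 0, 1} := fun t ht => by
    rcases hdich t ht with heq | hzero
    · rcases det_transpose_mul_eq_one_or_of_arrSpace_le hv (hmem t ht).1 heq.le with h | h <;>
        simp [g, h]
    · simp [hzero]
  have hgc : ContinuousOn g (Set.Icc 0 1) :=
    (continuous_id.matrix_transpose.matrix_mul continuous_const).matrix_det.comp_continuousOn hc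
  have hg1 : g 1 = g 0 :=
    isPreconnected_Icc.constant_of_mapsTo (Set.toFinite _).isDiscrete hgc hg h1 h0
  have hg0 : g 0 = 1 := by simp [g, hv.transpose_mul_self]
  rcases hdich 1 h1 with heq | hzero
  · exact hne ((areEquivalent_iff_arrSpace_eq hv (hmem 1 h1).1).mpr heq.symm)
  · simp [hg1, hg0] at hzero

lemma flexible_of_not_orthSpaces {v : Fin n → Fin d → ℝ} (hv : IsNormalized v)
    {T : Γ → Matrix (Fin d) (Fin d) ℝ} (hT : IsRepOf Γ T v) (hirr : IrredRep Γ T)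
    {W : Submodule ℝ (Fin n → ℝ)} (hinv : GammaInvariant Γ W) (hW : Module.finrank ℝ W = d)
    (hne : W ≠ arrSpace v) (horth : ¬ OrthSpaces (arrSpace v) W) :
    Flexible Γ v := by
  obtain ⟨w, hw, hTw, rfl, μ, hμ, hvw⟩ := exists_isRepOf_arrSpace_eq hT hirr hinv hW horth
  exact ⟨w, deformEquiv_of_transpose_mul_eq_smul hv hw hT hTw (by linarith) hvw,
    fun h => hne ((areEquivalent_iff_arrSpace_eq hv hw).mp h).symm⟩

end

theorem stmt13 {n d : ℕ} (Γ : Subgroup (Equiv.Perm (Fin n)))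
    (v : Fin n → Fin d → ℝ) (hv : v ∈ SdSet n d Γ)
    (T : Γ → Matrix (Fin d) (Fin d) ℝ)
    (hT : IsRepOf Γ T v) (hTirr : IrredRep Γ T) :
    Flexible Γ v ↔
      ∃ W : Submodule ℝ (Fin n → ℝ), GammaInvariant Γ W ∧
        Module.finrank ℝ W = d ∧ W ≠ arrSpace v ∧ ¬ OrthSpaces (arrSpace v) W :=
  ⟨exists_gammaInvariant_of_flexible hv.1, fun ⟨_, hinv, hW, hne, horth⟩ =>
    flexible_of_not_orthSpaces hv.1 hT hTirr hinv hW hne horth⟩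
end

section
/- Let Γ ⊆ Sym({1,…,n}) be a permutation group, let d be odd, let v ∈ S_d(Γ) be irreducible, and let τ ∈ O(ℝ^d) with det τ = −1. Then v and the mirror arrangement τv = (τv_1,…,τv_n) are deformation equivalent if and only if v is flexible. -/
open Matrix

/-!
For normalized `w` put `g(w) = det (M_wᵀ M_v)` (`detPair v w`). If `w = X v` with `X` invertible,
normalization forces `X Xᵀ = 1`, so `g(w) = det X = ±1`.

Rigid ⇒ not deformable into `τv`: along a deformation from `v`, `g` starts at `1`; at `τv` it is
`det τ = -1`, so by the intermediate value theorem it passes through `1/2`, at an arrangement that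
cannot be equivalent to `v`.

Flexible ⇒ deformable into `τv`: the same argument produces `b ∈ S_d(Γ)` not equivalent to `v`
with `S = M_vᵀ M_b` invertible. `S` intertwines the representations, so `S b` is `T`-equivariant;
its component orthogonal to `v` is nonzero (otherwise `b` would be equivalent to `v`), and by
Schur's lemma its Gram matrix is scalar, so it rescales to a normalized `T`-equivariant `w` with
`M_vᵀ M_w = 0`. Then `cos θ • v + sin θ • w` joins `v` to `-v` inside `S_d(Γ)`. Since `d` is odd,
`-τ ∈ SO(d)`, and `SO(d)` is path connected: by Cartan–Dieudonné its elements are products of an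
even number of reflections, and reflections in unit vectors are joined to each other along the
sphere. Applying such a path to `-v` joins `-v` to `τv`.
-/

namespace Matrix

variable {d : ℕ}

noncomputable def reflection (u : EuclideanSpace ℝ (Fin d)) : Matrix (Fin d) (Fin d) ℝ :=
  1 - (2 : ℝ) • vecMulVec u u

lemma toEuclideanCLM_reflection {u : EuclideanSpace ℝ (Fin d)} (hu : ‖u‖ = 1) :
    toEuclideanCLM (𝕜 := ℝ) (reflection u) = ((ℝ ∙ u)ᗮ.reflection : _ →L[ℝ] _) := by
  ext x i
  simp [reflection, Submodule.reflection_orthogonal_apply,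
    Submodule.reflection_singleton_apply, hu, vecMulVec_mulVec,
    EuclideanSpace.inner_eq_star_dotProduct, dotProduct_comm, mul_comm]

lemma reflection_mul_self {u : EuclideanSpace ℝ (Fin d)} (hu : ‖u‖ = 1) :
    reflection u * reflection u = 1 := by
  refine EquivLike.injective (toEuclideanCLM (𝕜 := ℝ) (n := Fin d)) ?_
  rw [map_mul, toEuclideanCLM_reflection hu, map_one]
  ext1 x
  simp

lemma transpose_reflection (u : EuclideanSpace ℝ (Fin d)) : (reflection u)ᵀ = reflection u := by
  simp [reflection, transpose_vecMulVec]

lemma reflection_mem_orthogonalGroup {u : EuclideanSpace ℝ (Fin d)} (hu : ‖u‖ = 1) :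
    reflection u ∈ orthogonalGroup (Fin d) ℝ := by
  rw [mem_orthogonalGroup_iff', transpose_reflection, reflection_mul_self hu]

lemma det_reflection {u : EuclideanSpace ℝ (Fin d)} (hu : ‖u‖ = 1) : (reflection u).det = -1 := by
  have hdot : (u : Fin d → ℝ) ⬝ᵥ u = 1 := by
    have h := real_inner_self_eq_norm_sq u
    rw [EuclideanSpace.inner_eq_star_dotProduct, hu] at h
    simpa [dotProduct_comm] using h
  rw [reflection, sub_eq_add_neg, ← neg_smul, ← smul_vecMulVec, vecMulVec_eq (Fin 1),
    det_one_add_replicateCol_mul_replicateRow]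
  simp [hdot]
  norm_num

lemma continuous_reflection : Continuous (reflection (d := d)) := by
  unfold reflection
  fun_prop

/-- The factorization of `LinearIsometryEquiv.reflections_generate_dim` may contain `0`, whose
reflection `(ℝ ∙ 0)ᗮ.reflection` is the identity; every other vector is normalized. -/
lemma exists_toEuclideanCLM_eq_prod_reflection (l : List (EuclideanSpace ℝ (Fin d))) :
    ∃ l' : List (EuclideanSpace ℝ (Fin d)), (∀ u ∈ l', ‖u‖ = 1) ∧
      toEuclideanCLM (𝕜 := ℝ) (l'.map reflection).prod =
        (l.map fun v => ((ℝ ∙ v)ᗮ.reflection : _ →L[ℝ] _)).prod := by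
  induction l with
  | nil => exact ⟨[], by simp, by simp⟩
  | cons v l ih =>
    obtain ⟨l', hl', hprod⟩ := ih
    rcases eq_or_ne v 0 with rfl | hv
    · have htop : ((⊤ : Submodule ℝ (EuclideanSpace ℝ (Fin d))).reflection :
          EuclideanSpace ℝ (Fin d) →L[ℝ] EuclideanSpace ℝ (Fin d)) = 1 := by
        ext1 x
        exact Submodule.reflection_mem_subspace_eq_self Submodule.mem_top
      exact ⟨l', hl', by simp [hprod, htop]⟩
    · have hu : ‖‖v‖⁻¹ • v‖ = 1 := by
        rw [norm_smul, norm_inv, norm_norm, inv_mul_cancel₀ (norm_ne_zero_iff.2 hv)]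
      refine ⟨‖v‖⁻¹ • v :: l', ?_, ?_⟩
      · simpa [hu] using hl'
      · have hspan : (ℝ ∙ ‖v‖⁻¹ • v) = ℝ ∙ v :=
          Submodule.span_singleton_smul_eq (by simpa using hv) v
        simp only [List.map_cons, List.prod_cons, map_mul, hprod, toEuclideanCLM_reflection hu,
          hspan]

lemma exists_eq_prod_reflection {R : Matrix (Fin d) (Fin d) ℝ}
    (hR : R ∈ orthogonalGroup (Fin d) ℝ) :
    ∃ l : List (EuclideanSpace ℝ (Fin d)), (∀ u ∈ l, ‖u‖ = 1) ∧ R = (l.map reflection).prod := by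
  let U : unitary (EuclideanSpace ℝ (Fin d) →L[ℝ] EuclideanSpace ℝ (Fin d)) :=
    ⟨toEuclideanCLM (𝕜 := ℝ) R, Unitary.map_mem toEuclideanCLM hR⟩
  obtain ⟨l, -, hl⟩ := (Unitary.linearIsometryEquiv U).reflections_generate_dim
  obtain ⟨l', hl', hprod⟩ := exists_toEuclideanCLM_eq_prod_reflection l
  refine ⟨l', hl', EquivLike.injective (toEuclideanCLM (𝕜 := ℝ) (n := Fin d)) ?_⟩
  rw [hprod]
  have := congrArg (fun e => (Unitary.linearIsometryEquiv.symm e).val) hl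
  simpa [map_list_prod, Function.comp_def] using this

lemma joinedIn_reflection (hd : 2 ≤ d) {u w : EuclideanSpace ℝ (Fin d)} (hu : ‖u‖ = 1)
    (hw : ‖w‖ = 1) : JoinedIn (orthogonalGroup (Fin d) ℝ) (reflection u) (reflection w) := by
  have hrank : 1 < Module.rank ℝ (EuclideanSpace ℝ (Fin d)) := by
    rw [← Module.finrank_eq_rank, finrank_euclideanSpace_fin]
    exact_mod_cast hd
  have hsphere := isPathConnected_sphere hrank 0 zero_le_one
  refine ((hsphere.joinedIn u (by simpa) w (by simpa)).map continuous_reflection).mono ?_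
  rintro _ ⟨x, hx, rfl⟩
  exact reflection_mem_orthogonalGroup (by simpa using hx)

lemma joinedIn_prod_reflection (hd : 2 ≤ d) {e : EuclideanSpace ℝ (Fin d)} (he : ‖e‖ = 1)
    (l : List (EuclideanSpace ℝ (Fin d))) (hl : ∀ u ∈ l, ‖u‖ = 1) :
    JoinedIn (orthogonalGroup (Fin d) ℝ) (l.map reflection).prod (reflection e ^ l.length) := by
  induction l with
  | nil => exact JoinedIn.refl (one_mem _)
  | cons u l ih =>
    rw [List.map_cons, List.prod_cons, List.length_cons, pow_succ']
    refine ((joinedIn_reflection hd (hl u (by simp)) he).mul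
      (ih fun w hw => hl w (by simp [hw]))).mono ?_
    exact Set.mul_subset_iff.2 fun a ha b hb => mul_mem ha hb

lemma joinedIn_one_of_mem_specialOrthogonalGroup {R : Matrix (Fin d) (Fin d) ℝ}
    (hR : R ∈ specialOrthogonalGroup (Fin d) ℝ) :
    JoinedIn (orthogonalGroup (Fin d) ℝ) 1 R := by
  rw [mem_specialOrthogonalGroup_iff] at hR
  rcases lt_or_ge d 2 with hd | hd
  · have hR1 : R = 1 := by
      interval_cases d
      · exact Subsingleton.elim _ _
      · ext i j
        fin_cases i; fin_cases j
        simpa [det_fin_one] using hR.2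
    subst hR1
    exact JoinedIn.refl (one_mem _)
  · obtain ⟨l, hl, rfl⟩ := exists_eq_prod_reflection hR.1
    have he : ‖EuclideanSpace.single (⟨0, by omega⟩ : Fin d) (1 : ℝ)‖ = 1 := by simp
    have hdet : ((l.map reflection).prod).det = (-1) ^ l.length := by
      rw [← coe_detMonoidHom, map_list_prod, List.map_map, Function.comp_def, coe_detMonoidHom,
        List.map_congr_left fun u hu => det_reflection (hl u hu), List.map_const',
        List.prod_replicate]
    obtain ⟨k, hk⟩ := (neg_one_pow_eq_one_iff_even (by norm_num)).1 (hdet ▸ hR.2)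
    have hpath := joinedIn_prod_reflection hd he l hl
    rw [hk, ← two_mul, pow_mul, sq, reflection_mul_self he, one_pow] at hpath
    exact hpath.symm

end Matrix

section Arrangement

open Set

variable {n d : ℕ} {Γ : Subgroup (Equiv.Perm (Fin n))} {T T' : Γ → Matrix (Fin d) (Fin d) ℝ}
  {a b u : Fin n → Fin d → ℝ}

def IsEquivariant (T : Γ → Matrix (Fin d) (Fin d) ℝ) (a : Fin n → Fin d → ℝ) : Prop :=
  ∀ (φ : Γ) (i : Fin n), T φ *ᵥ a i = a (φ.val i)

lemma IsEquivariant.add (ha : IsEquivariant T a) (hb : IsEquivariant T b) :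
    IsEquivariant T (fun i => a i + b i) :=
  fun φ i => by rw [mulVec_add, ha φ i, hb φ i]

lemma IsEquivariant.smul (ha : IsEquivariant T a) (c : ℝ) : IsEquivariant T (fun i => c • a i) :=
  fun φ i => by rw [mulVec_smul, ha φ i]

lemma IsEquivariant.mulVec {S : Matrix (Fin d) (Fin d) ℝ} (hS : ∀ φ, T φ * S = S * T' φ)
    (ha : IsEquivariant T' a) : IsEquivariant T (fun i => S *ᵥ a i) :=
  fun φ i => by rw [mulVec_mulVec, hS φ, ← mulVec_mulVec, ha φ i]

lemma arrMat_mulVec (X : Matrix (Fin d) (Fin d) ℝ) (w : Fin n → Fin d → ℝ) :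
    arrMat (fun i => X *ᵥ w i) = arrMat w * Xᵀ := by
  ext i l
  simp [arrMat, Matrix.mul_apply, Matrix.mulVec, dotProduct, mul_comm]

lemma arrMat_eq_of_mulVec {X : Matrix (Fin d) (Fin d) ℝ} (h : ∀ i, X *ᵥ a i = b i) :
    arrMat b = arrMat a * Xᵀ := by
  rw [← arrMat_mulVec]
  simp only [h]

lemma gram_comp_perm (p q : Fin n → Fin d → ℝ) (σ : Equiv.Perm (Fin n)) :
    (arrMat (fun i => p (σ i)))ᵀ * arrMat (fun i => q (σ i)) = (arrMat p)ᵀ * arrMat q := by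
  change ((arrMat p).submatrix σ id)ᵀ * (arrMat q).submatrix σ id = _
  rw [transpose_submatrix, submatrix_mul_equiv _ _ _ σ _, submatrix_id_id]

lemma mul_gram_eq_gram_mul (hT' : IsRep Γ T') (ha : IsEquivariant T a) (hb : IsEquivariant T' b)
    (φ : Γ) : T φ * ((arrMat a)ᵀ * arrMat b) = ((arrMat a)ᵀ * arrMat b) * T' φ := by
  have h := gram_comp_perm a b φ.val
  simp only [← ha φ, ← hb φ, arrMat_mulVec, transpose_mul, transpose_transpose] at h
  calc T φ * ((arrMat a)ᵀ * arrMat b)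
      = T φ * (arrMat a)ᵀ * (arrMat b * ((T' φ)ᵀ * T' φ)) := by
        rw [hT'.1 φ, Matrix.mul_one, Matrix.mul_assoc]
    _ = T φ * (arrMat a)ᵀ * (arrMat b * (T' φ)ᵀ) * T' φ := by simp only [Matrix.mul_assoc]
    _ = ((arrMat a)ᵀ * arrMat b) * T' φ := by rw [h]

lemma mul_transpose_eq_one_of_mulVec {X : Matrix (Fin d) (Fin d) ℝ} (ha : IsNormalized a)
    (hb : IsNormalized b) (h : ∀ i, X *ᵥ a i = b i) : X * Xᵀ = 1 := by
  have hb' : (arrMat b)ᵀ * arrMat b = 1 := hb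
  rwa [arrMat_eq_of_mulVec h, transpose_mul, transpose_transpose, Matrix.mul_assoc,
    ← Matrix.mul_assoc (arrMat a)ᵀ, ha, Matrix.one_mul] at hb'

lemma areEquivalent_of_mulVec {X : Matrix (Fin d) (Fin d) ℝ} (ha : IsNormalized a)
    (hb : IsNormalized b) (h : ∀ i, X *ᵥ a i = b i) : AreEquivalent a b := by
  refine ⟨X, fun h0 => ?_, h⟩
  have := congrArg det (mul_transpose_eq_one_of_mulVec ha hb h)
  simp [h0] at this

lemma detPair_mulVec (ha : IsNormalized a) (X : Matrix (Fin d) (Fin d) ℝ) :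
    detPair a (fun i => X *ᵥ a i) = X.det := by
  have ha' : (arrMat a)ᵀ * arrMat a = 1 := ha
  rw [detPair, arrMat_mulVec, transpose_mul, transpose_transpose, Matrix.mul_assoc, ha',
    Matrix.mul_one]

lemma detPair_self (ha : IsNormalized a) : detPair a a = 1 := by
  simpa using detPair_mulVec ha 1

lemma detPair_sq_eq_one (ha : IsNormalized a) (hb : IsNormalized b) (h : AreEquivalent a b) :
    detPair a b ^ 2 = 1 := by
  obtain ⟨X, -, hX⟩ := h
  have := congrArg det (mul_transpose_eq_one_of_mulVec ha hb hX)
  rw [det_mul, det_transpose, det_one] at this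
  rw [← funext hX, detPair_mulVec ha, sq, this]

lemma continuous_detPair (p : Fin n → Fin d → ℝ) : Continuous (detPair p) := by
  unfold detPair arrMat
  fun_prop

lemma mulVec_mem_sdSet {X : Matrix (Fin d) (Fin d) ℝ} (hX : X ∈ orthogonalGroup (Fin d) ℝ)
    (ha : a ∈ SdSet n d Γ) : (fun i => X *ᵥ a i) ∈ SdSet n d Γ := by
  obtain ⟨ha, T, hT, haT⟩ := ha
  have hXX : X * Xᵀ = 1 := (mem_orthogonalGroup_iff (Fin d) ℝ).1 hX
  have hXX' : Xᵀ * X = 1 := (mem_orthogonalGroup_iff' (Fin d) ℝ).1 hX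
  refine ⟨?_, fun φ => X * T φ * Xᵀ, ⟨fun φ => ?_, fun φ ψ => ?_⟩, fun φ i => ?_⟩
  · change (arrMat _)ᵀ * arrMat _ = 1
    rw [arrMat_mulVec, transpose_mul, transpose_transpose, Matrix.mul_assoc,
      ← Matrix.mul_assoc (arrMat a)ᵀ, ha, Matrix.one_mul, hXX]
  · rw [transpose_mul, transpose_mul, transpose_transpose]
    simp only [Matrix.mul_assoc]
    rw [← Matrix.mul_assoc Xᵀ X, hXX', Matrix.one_mul, ← Matrix.mul_assoc (T φ)ᵀ, hT.1 φ,
      Matrix.one_mul, hXX]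
  · change X * T (φ * ψ) * Xᵀ = X * T φ * Xᵀ * (X * T ψ * Xᵀ)
    rw [hT.2 φ ψ]
    simp only [Matrix.mul_assoc]
    rw [← Matrix.mul_assoc Xᵀ X, hXX', Matrix.one_mul]
  · rw [mulVec_mulVec, Matrix.mul_assoc, hXX', Matrix.mul_one, ← mulVec_mulVec, haT φ i]

lemma joinedIn_mulVec {R : Matrix (Fin d) (Fin d) ℝ}
    (hR : JoinedIn (orthogonalGroup (Fin d) ℝ) 1 R) (ha : a ∈ SdSet n d Γ) :
    JoinedIn (SdSet n d Γ) a (fun i => R *ᵥ a i) := by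
  have h := hR.map (f := fun X : Matrix (Fin d) (Fin d) ℝ => fun i => X *ᵥ a i) (by fun_prop)
  simp only [one_mulVec] at h
  exact h.mono (by rintro _ ⟨X, hX, rfl⟩; exact mulVec_mem_sdSet hX ha)

lemma deformEquiv_of_joinedIn (h : JoinedIn (SdSet n d Γ) a b) : DeformEquiv Γ a b := by
  obtain ⟨γ, hγ⟩ := h
  exact ⟨γ.extend, γ.continuous_extend.continuousOn, fun t _ => hγ _, γ.extend_zero,
    γ.extend_one⟩

lemma deformEquiv_of_mem_Icc {c : ℝ → Fin n → Fin d → ℝ} (hc : ContinuousOn c (Icc 0 1))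
    (hcS : ∀ t ∈ Icc (0 : ℝ) 1, c t ∈ SdSet n d Γ) {t : ℝ} (ht : t ∈ Icc (0 : ℝ) 1) :
    DeformEquiv Γ (c 0) (c t) := by
  have hmaps : MapsTo (fun s => t * s) (Icc (0 : ℝ) 1) (Icc 0 1) := fun s hs =>
    ⟨mul_nonneg ht.1 hs.1, mul_le_one₀ ht.2 hs.1 hs.2⟩
  exact ⟨fun s => c (t * s), hc.comp (by fun_prop) hmaps, fun s hs => hcS _ (hmaps hs),
    by simp, by simp⟩

lemma exists_deformEquiv_detPair_eq_half (ha : IsNormalized a) (hab : DeformEquiv Γ a b)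
    (hb : detPair a b ≤ 1 / 2) : ∃ u ∈ SdSet n d Γ, DeformEquiv Γ a u ∧ detPair a u = 1 / 2 := by
  obtain ⟨c, hc, hcS, rfl, rfl⟩ := hab
  obtain ⟨t, ht, hct⟩ := intermediate_value_Icc' zero_le_one
    ((continuous_detPair (c 0)).comp_continuousOn hc)
    ⟨hb, by rw [Function.comp_apply, detPair_self ha]; norm_num⟩
  exact ⟨c t, hcS t ht, deformEquiv_of_mem_Icc hc hcS ht, hct⟩

lemma not_areEquivalent_of_detPair_eq_half (ha : IsNormalized a) (hb : IsNormalized b)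
    (h : detPair a b = 1 / 2) : ¬ AreEquivalent a b := fun hab => by
  have := detPair_sq_eq_one ha hb hab
  rw [h] at this
  norm_num at this

lemma Flexible.exists_detPair_ne_zero (ha : IsNormalized a) (hflex : Flexible Γ a) :
    ∃ b ∈ SdSet n d Γ, ¬ AreEquivalent a b ∧ detPair a b ≠ 0 := by
  obtain ⟨w, hw, hne⟩ := hflex
  by_cases h0 : detPair a w = 0
  · obtain ⟨u, hu, -, hhalf⟩ := exists_deformEquiv_detPair_eq_half ha hw (by rw [h0]; norm_num)
    exact ⟨u, hu, not_areEquivalent_of_detPair_eq_half ha hu.1 hhalf, by rw [hhalf]; norm_num⟩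
  · obtain ⟨c, -, hcS, -, rfl⟩ := hw
    exact ⟨c 1, hcS 1 ⟨zero_le_one, le_rfl⟩, hne, h0⟩

lemma isNormalized_smul_add_smul (ha : IsNormalized a) (hb : IsNormalized b)
    (hab : (arrMat a)ᵀ * arrMat b = 0) {α β : ℝ} (hαβ : α ^ 2 + β ^ 2 = 1) :
    IsNormalized (fun i => α • a i + β • b i) := by
  have hba : (arrMat b)ᵀ * arrMat a = 0 := by
    rw [← transpose_transpose (arrMat a), ← transpose_mul, hab, transpose_zero]
  have hM : arrMat (fun i => α • a i + β • b i) = α • arrMat a + β • arrMat b := rfl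
  change (arrMat _)ᵀ * arrMat _ = 1
  rw [hM]
  simp only [transpose_add, transpose_smul, Matrix.add_mul, Matrix.mul_add, Matrix.smul_mul,
    Matrix.mul_smul, show (arrMat a)ᵀ * arrMat a = 1 from ha,
    show (arrMat b)ᵀ * arrMat b = 1 from hb, hab, hba, smul_zero, add_zero, zero_add, smul_smul,
    ← add_smul]
  rw [← sq, ← sq, hαβ, one_smul]

lemma joinedIn_neg_of_orthogonal (ha : IsNormalized a) (haT : IsRepOf Γ T a)
    (hb : IsNormalized b) (hbT : IsEquivariant T b) (hab : (arrMat a)ᵀ * arrMat b = 0) :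
    JoinedIn (SdSet n d Γ) a (fun i => -a i) := by
  refine JoinedIn.ofLine (f := fun t i => Real.cos (Real.pi * t) • a i +
    Real.sin (Real.pi * t) • b i) (by fun_prop) (by simp) (by simp) ?_
  rintro _ ⟨t, -, rfl⟩
  exact ⟨isNormalized_smul_add_smul ha hb hab (Real.cos_sq_add_sin_sq _), T, haT.1,
    (IsEquivariant.smul haT.2 _).add (hbT.smul _)⟩

/-- For normalized `a`, the columns of `arrMat (orthComponent a u)` are those of `arrMat u`
projected onto the orthogonal complement of the column space of `arrMat a`. -/
def orthComponent (a u : Fin n → Fin d → ℝ) : Fin n → Fin d → ℝ :=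
  fun i => u i - ((arrMat u)ᵀ * arrMat a) *ᵥ a i

lemma gram_orthComponent (ha : IsNormalized a) (u : Fin n → Fin d → ℝ) :
    (arrMat a)ᵀ * arrMat (orthComponent a u) = 0 := by
  have hM : arrMat (orthComponent a u) =
      arrMat u - arrMat (fun i => ((arrMat u)ᵀ * arrMat a) *ᵥ a i) := rfl
  rw [hM, arrMat_mulVec, Matrix.mul_sub, ← Matrix.mul_assoc,
    show (arrMat a)ᵀ * arrMat a = 1 from ha, Matrix.one_mul, transpose_mul, transpose_transpose,
    sub_self]

lemma IsEquivariant.orthComponent (ha : IsRepOf Γ T a) (hu : IsEquivariant T u) :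
    IsEquivariant T (orthComponent a u) := by
  have hG := IsEquivariant.mulVec (mul_gram_eq_gram_mul ha.1 hu ha.2) ha.2
  intro φ i
  rw [_root_.orthComponent, mulVec_sub, hu φ i, hG φ i]
  rfl

lemma exists_equivariant_orthogonal (ha : IsNormalized a) (haT : IsRepOf Γ T a)
    (hb : b ∈ SdSet n d Γ) (hab : ¬ AreEquivalent a b) (hdet : detPair a b ≠ 0) :
    ∃ u, IsEquivariant T u ∧ (arrMat a)ᵀ * arrMat u = 0 ∧ u ≠ 0 := by
  obtain ⟨T', hbT'⟩ := hb.2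
  set S := (arrMat a)ᵀ * arrMat b with hS
  have hSb : IsEquivariant T (fun i => S *ᵥ b i) :=
    IsEquivariant.mulVec (mul_gram_eq_gram_mul hbT'.1 haT.2 hbT'.2) hbT'.2
  refine ⟨orthComponent a (fun i => S *ᵥ b i), hSb.orthComponent haT, gram_orthComponent ha _,
    fun h0 => hab ?_⟩
  have hSdet : IsUnit S.det := by
    rwa [isUnit_iff_ne_zero, hS, ← det_transpose, transpose_mul, transpose_transpose]
  refine areEquivalent_of_mulVec ha hb.1
    (X := S⁻¹ * ((arrMat (fun i => S *ᵥ b i))ᵀ * arrMat a)) fun i => ?_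
  have hi : S *ᵥ b i = ((arrMat (fun i => S *ᵥ b i))ᵀ * arrMat a) *ᵥ a i :=
    sub_eq_zero.1 (congrFun h0 i)
  rw [← mulVec_mulVec, ← hi, mulVec_mulVec, nonsing_inv_mul _ hSdet, one_mulVec]

lemma exists_eq_smul_one_of_commute (hT : IrredRep Γ T) {B : Matrix (Fin d) (Fin d) ℝ}
    (hB : Bᵀ = B) (hcomm : ∀ φ, T φ * B = B * T φ) : ∃ t : ℝ, B = t • 1 := by
  rcases eq_or_ne B 0 with rfl | hB0
  · exact ⟨0, by simp⟩
  obtain ⟨x, t, -, hx, hBx⟩ := (show B.IsHermitian from hB).exists_eigenvector_of_ne_zero hB0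
  let W := LinearMap.ker (toLin' (B - t • 1))
  have hW : ∀ z, z ∈ W ↔ B *ᵥ z = t • z := fun z => by simp [W, sub_eq_zero]
  rcases hT W fun φ z hz => by
      rw [hW] at hz ⊢
      rw [mulVec_mulVec, ← hcomm φ, ← mulVec_mulVec, hz, mulVec_smul] with hbot | htop
  · exact absurd (by simpa [hbot] using (hW x).2 hBx) hx
  · exact ⟨t, sub_eq_zero.1 (toLin'.map_eq_zero_iff.1 (LinearMap.ker_eq_top.1 htop))⟩

lemma exists_isNormalized_smul (hT : IrredRep Γ T) (hTrep : IsRep Γ T) (hu : IsEquivariant T u)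
    (hu0 : u ≠ 0) : ∃ c : ℝ, IsNormalized (fun i => c • u i) := by
  obtain ⟨t, ht⟩ := exists_eq_smul_one_of_commute hT
    (by rw [transpose_mul, transpose_transpose]) (mul_gram_eq_gram_mul hTrep hu hu)
  obtain ⟨i, k, hik⟩ : ∃ i k, u i k ≠ 0 := by
    by_contra! h
    exact hu0 (funext fun i => funext (h i))
  have htpos : 0 < t := by
    have hkk := congrFun (congrFun ht k) k
    simp only [Matrix.mul_apply, transpose_apply, arrMat, of_apply, Matrix.smul_apply,
      one_apply_eq, smul_eq_mul, mul_one] at hkk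
    rw [← hkk]
    exact Finset.sum_pos' (fun j _ => mul_self_nonneg _)
      ⟨i, Finset.mem_univ _, mul_self_pos.2 hik⟩
  refine ⟨(Real.sqrt t)⁻¹, ?_⟩
  change (arrMat _)ᵀ * arrMat _ = 1
  rw [show arrMat (fun i => (Real.sqrt t)⁻¹ • u i) = (Real.sqrt t)⁻¹ • arrMat u from rfl,
    transpose_smul, Matrix.smul_mul, Matrix.mul_smul, ht, smul_smul, smul_smul, ← mul_inv,
    Real.mul_self_sqrt htpos.le, inv_mul_cancel₀ htpos.ne', one_smul]

lemma Flexible.joinedIn_neg (ha : IsNormalized a) (haT : IsRepOf Γ T a) (hT : IrredRep Γ T)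
    (hflex : Flexible Γ a) : JoinedIn (SdSet n d Γ) a (fun i => -a i) := by
  obtain ⟨b, hb, hab, hdet⟩ := hflex.exists_detPair_ne_zero ha
  obtain ⟨u, hu, horth, hu0⟩ := exists_equivariant_orthogonal ha haT hb hab hdet
  obtain ⟨c, hc⟩ := exists_isNormalized_smul hT haT.1 hu hu0
  refine joinedIn_neg_of_orthogonal ha haT hc (hu.smul c) ?_
  rw [show arrMat (fun i => c • u i) = c • arrMat u from rfl, Matrix.mul_smul, horth, smul_zero]

end Arrangement

theorem stmt14 {n d : ℕ} (Γ : Subgroup (Equiv.Perm (Fin n))) (hd : Odd d)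
    (v : Fin n → Fin d → ℝ) (hv : v ∈ SdSet n d Γ)
    (T : Γ → Matrix (Fin d) (Fin d) ℝ)
    (hT : IsRepOf Γ T v) (hTirr : IrredRep Γ T)
    (τ : Matrix (Fin d) (Fin d) ℝ) (hτ : τᵀ * τ = 1) (hτdet : τ.det = -1) :
    DeformEquiv Γ v (fun i => τ.mulVec (v i)) ↔ Flexible Γ v := by
  constructor
  · intro h
    obtain ⟨u, hu, hvu, hhalf⟩ := exists_deformEquiv_detPair_eq_half hv.1 h
      (by rw [detPair_mulVec hv.1, hτdet]; norm_num)
    exact ⟨u, hvu, not_areEquivalent_of_detPair_eq_half hv.1 hu.1 hhalf⟩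
  · intro hflex
    have hneg := hflex.joinedIn_neg hv.1 hT hTirr
    have hrot : -τ ∈ specialOrthogonalGroup (Fin d) ℝ := by
      rw [mem_specialOrthogonalGroup_iff, mem_orthogonalGroup_iff', det_neg, hτdet,
        Fintype.card_fin, hd.neg_one_pow]
      exact ⟨by simpa using hτ, by norm_num⟩
    have hmirror := joinedIn_mulVec (joinedIn_one_of_mem_specialOrthogonalGroup hrot) hneg.mem.2
    simp only [mulVec_neg, neg_mulVec, neg_neg] at hmirror
    exact deformEquiv_of_joinedIn (hneg.trans hmirror)
end

section
/- Let Γ ⊆ Sym({1,…,n}) be a permutation group and d ≥ 1. Suppose v^1,…,v^k are normalized irreducible Γ-arrangements of n points, where v^j has dimension d_j ≥ d (i.e., v^j consists of points in ℝ^{d_j} with d_j ≥ d), and suppose that for all i ≠ j the representations of v^i and v^j are not isomorphic. Then d·k ≤ n, i.e., k ≤ n/d. -/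
open Matrix

/-- Isomorphy of representations possibly living in different dimensions:
an equivariant bijective linear map (forcing the dimensions to agree). -/
def IsoRepsDep {n e e' : ℕ} (Γ : Subgroup (Equiv.Perm (Fin n)))
    (T : Γ → Matrix (Fin e) (Fin e) ℝ) (T' : Γ → Matrix (Fin e') (Fin e') ℝ) : Prop :=
  ∃ R : (Fin e → ℝ) →ₗ[ℝ] (Fin e' → ℝ), Function.Bijective R ∧
    ∀ (φ : Γ) (x : Fin e → ℝ), R ((T φ).mulVec x) = (T' φ).mulVec (R x)

/-- Equivalence of arrangements possibly living in different dimensions: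
a bijective linear map carrying one to the other (never holds across dimensions). -/
def AreEquivalentDep {n e e' : ℕ} (v : Fin n → Fin e → ℝ) (w : Fin n → Fin e' → ℝ) : Prop :=
  ∃ X : (Fin e → ℝ) →ₗ[ℝ] (Fin e' → ℝ), Function.Bijective X ∧ ∀ i, X (v i) = w i


/-!
By Schur's lemma the Gram matrix `M_jᵀ M_i` of two arrangements with non-isomorphic irreducible
representations vanishes, since it intertwines them. Hence the columns of all the `M_j` together
form an orthonormal family of `∑ d_j ≥ d k` vectors in `ℝ^n`.
-/

section Blocks

variable {R m ι : Type*} {κ : ι → Type*} [CommRing R] [Nontrivial R] [Fintype m]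
  [Fintype ι] [DecidableEq ι] [∀ j, Fintype (κ j)] [∀ j, DecidableEq (κ j)]

/-- Juxtaposing mutually orthogonal blocks with orthonormal columns gives a matrix `U` with
`Uᵀ U = 1`, whose rank is therefore both its number of columns and at most its number of rows. -/
theorem sum_card_le_card_of_orthonormal_blocks (M : (j : ι) → Matrix m (κ j) R)
    (hnorm : ∀ j, (M j)ᵀ * M j = 1) (horth : ∀ i j, i ≠ j → (M j)ᵀ * M i = 0) :
    ∑ j, Fintype.card (κ j) ≤ Fintype.card m := by
  let U : Matrix m (Σ j, κ j) R := Matrix.of fun r s => M s.1 r s.2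
  have hU : Uᵀ * U = 1 := by
    ext ⟨j, a⟩ ⟨i, b⟩
    have hentry : (Uᵀ * U) ⟨j, a⟩ ⟨i, b⟩ = ((M j)ᵀ * M i) a b := rfl
    rw [hentry]
    by_cases hij : j = i
    · subst hij
      simp [hnorm, Matrix.one_apply]
    · simp [horth i j (Ne.symm hij), hij]
  calc ∑ j, Fintype.card (κ j) = (Uᵀ * U).rank := by
        rw [hU, Matrix.rank_one, Fintype.card_sigma]
    _ ≤ U.rank := Matrix.rank_mul_le_right _ _
    _ ≤ Fintype.card m := U.rank_le_card_height

end Blocks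

section Representations

variable {n e e' : ℕ} {Γ : Subgroup (Equiv.Perm (Fin n))}

theorem IsRep.map_one {T : Γ → Matrix (Fin e) (Fin e) ℝ} (hT : IsRep Γ T) : T 1 = 1 := by
  have hidem : T 1 * T 1 = T 1 := by rw [← hT.2 1 1, one_mul]
  calc T 1 = (T 1)ᵀ * T 1 * T 1 := by rw [hT.1 1, Matrix.one_mul]
    _ = 1 := by rw [Matrix.mul_assoc, hidem, hT.1 1]

theorem IsRep.map_inv {T : Γ → Matrix (Fin e) (Fin e) ℝ} (hT : IsRep Γ T) (φ : Γ) :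
    T φ⁻¹ = (T φ)ᵀ := by
  have hleft : T φ⁻¹ * T φ = 1 := by rw [← hT.2, inv_mul_cancel, hT.map_one]
  exact (Matrix.inv_eq_left_inv hleft).symm.trans (Matrix.inv_eq_left_inv (hT.1 φ))

theorem IsRepOf.arrMat_mul_transpose {T : Γ → Matrix (Fin e) (Fin e) ℝ}
    {v : Fin n → Fin e → ℝ} (hT : IsRepOf Γ T v) (φ : Γ) :
    arrMat v * (T φ)ᵀ = (arrMat v).submatrix φ.val id := by
  ext i a
  rw [Matrix.submatrix_apply, id, arrMat, Matrix.of_apply, ← hT.2 φ i]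
  simp [Matrix.mul_apply, Matrix.mulVec, dotProduct, mul_comm]

theorem IsRepOf.intertwines {T : Γ → Matrix (Fin e) (Fin e) ℝ}
    {T' : Γ → Matrix (Fin e') (Fin e') ℝ} {v : Fin n → Fin e → ℝ} {w : Fin n → Fin e' → ℝ}
    (hT : IsRepOf Γ T v) (hT' : IsRepOf Γ T' w) (φ : Γ) :
    T' φ * ((arrMat w)ᵀ * arrMat v) = (arrMat w)ᵀ * arrMat v * T φ := by
  have hφ : φ.val.symm = (φ⁻¹ : Γ).val := by simp [Equiv.Perm.inv_def]
  calc T' φ * ((arrMat w)ᵀ * arrMat v)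
      = (arrMat w * (T' φ)ᵀ)ᵀ * arrMat v := by
        rw [Matrix.transpose_mul, Matrix.transpose_transpose, Matrix.mul_assoc]
    _ = (arrMat w)ᵀ * (arrMat v).submatrix (φ⁻¹ : Γ).val id := by
        rw [hT'.arrMat_mul_transpose, Matrix.transpose_submatrix, ← hφ,
          ← Matrix.submatrix_id_mul_right, Matrix.submatrix_id_id]
    _ = (arrMat w)ᵀ * arrMat v * T φ := by
        rw [← hT.arrMat_mul_transpose, hT.1.map_inv, Matrix.transpose_transpose, Matrix.mul_assoc]

/-- Schur's lemma: the kernel and the range of an intertwiner are invariant subspaces. -/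
theorem IrredRep.intertwiner_eq_zero {T : Γ → Matrix (Fin e) (Fin e) ℝ}
    {T' : Γ → Matrix (Fin e') (Fin e') ℝ} (hT : IrredRep Γ T) (hT' : IrredRep Γ T')
    {N : Matrix (Fin e') (Fin e) ℝ} (hN : ∀ φ, T' φ * N = N * T φ)
    (hiso : ¬ IsoRepsDep Γ T T') : N = 0 := by
  by_contra hN0
  have hR0 : Matrix.toLin' N ≠ 0 := by rwa [ne_eq, map_eq_zero_iff _ Matrix.toLin'.injective]
  have hcomm : ∀ φ x, Matrix.toLin' N (T φ *ᵥ x) = T' φ *ᵥ Matrix.toLin' N x := by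
    intro φ x
    simp only [Matrix.toLin'_apply, Matrix.mulVec_mulVec, hN]
  have hker : LinearMap.ker (Matrix.toLin' N) = ⊥ := by
    refine (hT _ fun φ x hx => ?_).resolve_right (mt LinearMap.ker_eq_top.mp hR0)
    rw [LinearMap.mem_ker] at hx ⊢
    rw [hcomm, hx, Matrix.mulVec_zero]
  have hrange : LinearMap.range (Matrix.toLin' N) = ⊤ := by
    refine (hT' _ fun φ y hy => ?_).resolve_left (mt LinearMap.range_eq_bot.mp hR0)
    obtain ⟨x, rfl⟩ := hy
    exact ⟨T φ *ᵥ x, hcomm φ x⟩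
  exact hiso ⟨Matrix.toLin' N,
    ⟨LinearMap.ker_eq_bot.mp hker, LinearMap.range_eq_top.mp hrange⟩, hcomm⟩

end Representations

theorem stmt17_general {n : ℕ} (Γ : Subgroup (Equiv.Perm (Fin n))) (d k : ℕ)
    (dims : Fin k → ℕ) (hdims : ∀ j, d ≤ dims j)
    (v : (j : Fin k) → Fin n → Fin (dims j) → ℝ)
    (hnorm : ∀ j, IsNormalized (v j))
    (hrep : ∀ j, ∃ T : Γ → Matrix (Fin (dims j)) (Fin (dims j)) ℝ,
      IsRepOf Γ T (v j) ∧ IrredRep Γ T)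
    (hnoniso : ∀ i j, i ≠ j →
      ∀ (T : Γ → Matrix (Fin (dims i)) (Fin (dims i)) ℝ)
        (T' : Γ → Matrix (Fin (dims j)) (Fin (dims j)) ℝ),
        IsRepOf Γ T (v i) → IsRepOf Γ T' (v j) → ¬ IsoRepsDep Γ T T') :
    d * k ≤ n := by
  choose T hT hirr using hrep
  have horth : ∀ i j, i ≠ j → (arrMat (v j))ᵀ * arrMat (v i) = 0 := fun i j hij =>
    (hirr i).intertwiner_eq_zero (hirr j) ((hT i).intertwines (hT j))
      (hnoniso i j hij _ _ (hT i) (hT j))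
  calc d * k = ∑ _j : Fin k, d := by simp [mul_comm]
    _ ≤ ∑ j, dims j := Finset.sum_le_sum fun j _ => hdims j
    _ ≤ n := by
      simpa using sum_card_le_card_of_orthonormal_blocks (fun j => arrMat (v j)) hnorm horth

theorem stmt17 {n : ℕ} (Γ : Subgroup (Equiv.Perm (Fin n))) (d k : ℕ) (hd : 1 ≤ d)
    (dims : Fin k → ℕ) (hdims : ∀ j, d ≤ dims j)
    (v : (j : Fin k) → Fin n → Fin (dims j) → ℝ)
    (hnorm : ∀ j, IsNormalized (v j))
    (hrep : ∀ j, ∃ T : Γ → Matrix (Fin (dims j)) (Fin (dims j)) ℝ,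
      IsRepOf Γ T (v j) ∧ IrredRep Γ T)
    (hnoniso : ∀ i j, i ≠ j →
      ∀ (T : Γ → Matrix (Fin (dims i)) (Fin (dims i)) ℝ)
        (T' : Γ → Matrix (Fin (dims j)) (Fin (dims j)) ℝ),
        IsRepOf Γ T (v i) → IsRepOf Γ T' (v j) → ¬ IsoRepsDep Γ T T') :
    d * k ≤ n :=
  stmt17_general Γ d k dims hdims v hnorm hrep hnoniso
end
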